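/- Let G be a finite connected k-regular simple graph with n vertices and m edges, where k ≥ 2. Then the characteristic polynomial of U⁺ over ℂ factors as char(U⁺)(X) = (X² − 1)^{m−n} · ∏_{λ_A} (X² − λ_A·X + (k − 1)), where the product runs over the multiset of roots λ_A (with multiplicity) of the characteristic polynomial of the adjacency matrix A(G) over ℂ. (Theorem 5.1, stated as a polynomial factorization.) -/

import Mathlib

open Matrix SimpleGraph Polynomial

/-- The transition matrix `U` (over `ℝ`) of the discrete-time quantum walk on `G`, indexed
by darts: `U e f = 2 / deg (t f)` if `t f = o e` and `f ≠ e⁻¹`, `U e f = 2 / deg (t f) - 1`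
if `f = e⁻¹`, and `0` otherwise. -/
noncomputable def quantumUR {V : Type*} [Fintype V] (G : SimpleGraph V)
    [DecidableRel G.Adj] [DecidableEq V] : Matrix G.Dart G.Dart ℝ :=
  fun e f =>
    if f.toProd.2 = e.toProd.1 ∧ f ≠ e.symm then (2 : ℝ) / (G.degree f.toProd.2 : ℝ)
    else if f = e.symm then (2 : ℝ) / (G.degree f.toProd.2 : ℝ) - 1
    else 0

/-- The positive support of a real matrix, viewed as a matrix over a semiring `R`:
entry `1` where the original entry is positive, `0` otherwise. -/
noncomputable def posSupport {α : Type*} (R : Type*) [Zero R] [One R]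
    (F : Matrix α α ℝ) : Matrix α α R :=
  fun i j => if 0 < F i j then 1 else 0

/-!
With `S`, `T` the dart–vertex incidence matrices of origins and termini and `J` the reversal
of darts, the non-backtracking matrix is `B = S Tᵀ - J`, and `Tᵀ J = Sᵀ`, `J² = 1` give
`(x - B)(x - J) = (x² - 1) - S (x Tᵀ - Sᵀ)`. Moving `S` to the right (Sylvester's determinant
identity) turns the right side into the vertex matrix `(x² - 1) + D - x A`, since `Tᵀ S = A`
and `Sᵀ S = D` is the degree matrix; the same identity applied to the dart–edge incidence
matrix `M`, with `M Mᵀ = 1 + J` and `Mᵀ M = 2`, gives `det (x - J) = (x² - 1)^m`. For a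
`k`-regular graph with `k ≥ 2` the positive support of the quantum walk is exactly `B`, and the
vertex determinant factors over the eigenvalues of `A` as `∏ (x² - λ x + (k - 1))`.
-/

open Finset

theorem Matrix.det_scalar_sub_mul_comm {m n R : Type*} [Fintype m] [Fintype n] [DecidableEq m]
    [DecidableEq n] [CommRing R] (A : Matrix m n R) (B : Matrix n m R) (t : R) :
    t ^ Fintype.card n * det (scalar m t - A * B) =
      t ^ Fintype.card m * det (scalar n t - B * A) := by
  simpa [eval_charpoly] using congrArg (eval t) (charpoly_mul_comm' A B)

section SplitCharpoly

variable {n F : Type*} [Fintype n] [DecidableEq n] [Field F] {A : Matrix n n F}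

theorem Matrix.det_scalar_sub_smul_map_eq_prod_roots {K : Type*} [Field K] [Algebra F K]
    (hA : A.charpoly.Splits) (p : K) {q : K} (hq : q ≠ 0) :
    det (scalar n p - q • A.map (algebraMap F K)) =
      (A.charpoly.roots.map fun a => p - q * algebraMap F K a).prod := by
  have hcard : Multiset.card A.charpoly.roots = Fintype.card n := by
    rw [splits_iff_card_roots.mp hA, charpoly_natDegree_eq_dim]
  have hscale : scalar n p - q • A.map (algebraMap F K) =
      q • (scalar n (p / q) - A.map (algebraMap F K)) := by
    ext i j
    simp [scalar_apply, diagonal_apply, apply_ite, mul_sub, mul_div_cancel₀ _ hq]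
  rw [hscale, det_smul, ← eval_charpoly, charpoly_map]
  nth_rw 1 [hA.eq_prod_roots_of_monic (charpoly_monic A)]
  rw [Polynomial.map_multiset_prod, eval_multiset_prod, Multiset.map_map, Multiset.map_map,
    ← hcard, ← Multiset.prod_replicate, ← Multiset.map_const', ← Multiset.prod_map_mul]
  refine congrArg _ (Multiset.map_congr rfl fun a _ => ?_)
  simp only [Function.comp_apply, Polynomial.map_sub, map_X, map_C, eval_sub, eval_X, eval_C]
  field_simp

theorem Matrix.det_scalar_sub_smul_map_eq_prod_roots_of_isDomain {S : Type*} [CommRing S]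
    [IsDomain S] [Algebra F S] (hA : A.charpoly.Splits) (p : S) {q : S} (hq : q ≠ 0) :
    det (scalar n p - q • A.map (algebraMap F S)) =
      (A.charpoly.roots.map fun a => p - q * algebraMap F S a).prod := by
  apply IsFractionRing.injective S (FractionRing S)
  have hq' : algebraMap S (FractionRing S) q ≠ 0 := by simpa using hq
  have hmap :
      (algebraMap S (FractionRing S)).mapMatrix (scalar n p - q • A.map (algebraMap F S)) =
      scalar n (algebraMap S (FractionRing S) p) -
        algebraMap S (FractionRing S) q • A.map (algebraMap F (FractionRing S)) := by
    ext i j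
    simp only [RingHom.mapMatrix_apply, map_apply, sub_apply, smul_apply, smul_eq_mul, scalar_apply,
      diagonal_apply, map_sub, map_mul, apply_ite, map_zero, ← IsScalarTower.algebraMap_apply]
  rw [RingHom.map_det, hmap, det_scalar_sub_smul_map_eq_prod_roots hA _ hq', map_multiset_prod,
    Multiset.map_map]
  refine congrArg _ (Multiset.map_congr rfl fun a _ => ?_)
  simp [IsScalarTower.algebraMap_apply F S (FractionRing S)]

end SplitCharpoly

namespace SimpleGraph

theorem Dart.eq_symm_iff {V : Type*} {G : SimpleGraph V} {d d' : G.Dart} :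
    d = d'.symm ↔ d' = d.symm := by
  rw [eq_comm, Dart.symm_involutive.eq_iff]

theorem map_adjMatrix {V : Type*} (G : SimpleGraph V) [DecidableRel G.Adj] {R S : Type*}
    [NonAssocSemiring R] [NonAssocSemiring S] (f : R →+* S) :
    (G.adjMatrix R).map f = G.adjMatrix S := by
  ext u v
  simp [adjMatrix_apply, apply_ite f]

variable {V : Type*} [DecidableEq V] (G : SimpleGraph V) (R : Type*)

section IncidenceMatrices

variable [Zero R] [One R]

def dartFstMatrix : Matrix G.Dart V R := of fun d v => if d.fst = v then 1 else 0

def dartSndMatrix : Matrix G.Dart V R := of fun d v => if d.snd = v then 1 else 0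

def dartSymmMatrix : Matrix G.Dart G.Dart R := of fun d d' => if d' = d.symm then 1 else 0

def nonbacktrackingMatrix : Matrix G.Dart G.Dart R :=
  of fun d d' => if d'.snd = d.fst ∧ d' ≠ d.symm then 1 else 0

def dartEdgeMatrix : Matrix G.Dart G.edgeSet R := of fun d e => if d.edge = e then 1 else 0

theorem posSupport_quantumUR [Fintype V] [DecidableRel G.Adj] (h : ∀ v, 2 ≤ G.degree v) :
    posSupport R (quantumUR G) = G.nonbacktrackingMatrix R := by
  ext d d'
  have hdeg : (2 : ℝ) ≤ G.degree d'.snd := by exact_mod_cast h d'.snd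
  have hpos : (0 : ℝ) < 2 / G.degree d'.snd := div_pos two_pos (by linarith)
  have hnonpos : ¬ (0 : ℝ) < 2 / G.degree d'.snd - 1 := by
    rw [not_lt, sub_nonpos, div_le_one (by linarith)]
    exact hdeg
  by_cases hb : d'.snd = d.fst ∧ d' ≠ d.symm
  · simp [posSupport, quantumUR, nonbacktrackingMatrix, hb, hpos]
  · by_cases hs : d' = d.symm
    · simp [posSupport, quantumUR, nonbacktrackingMatrix, hs, hnonpos]
    · have hsnd : d'.snd ≠ d.fst := fun h' => hb ⟨h', hs⟩
      simp [posSupport, quantumUR, nonbacktrackingMatrix, hs, hsnd]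

end IncidenceMatrices

theorem map_nonbacktrackingMatrix {R S : Type*} [NonAssocSemiring R] [NonAssocSemiring S]
    (f : R →+* S) : (G.nonbacktrackingMatrix R).map f = G.nonbacktrackingMatrix S := by
  ext d d'
  simp [nonbacktrackingMatrix, apply_ite f]

variable [Fintype V] [CommRing R]

theorem nonbacktrackingMatrix_eq :
    G.nonbacktrackingMatrix R =
      G.dartFstMatrix R * (G.dartSndMatrix R)ᵀ - G.dartSymmMatrix R := by
  ext d d'
  by_cases h : d' = d.symm
  · subst h
    simp [nonbacktrackingMatrix, dartFstMatrix, dartSndMatrix, dartSymmMatrix, mul_apply]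
  · simp [nonbacktrackingMatrix, dartFstMatrix, dartSndMatrix, dartSymmMatrix, mul_apply, h,
      eq_comm]

variable [DecidableRel G.Adj]

theorem dartSndMatrix_transpose_mul_dartSymmMatrix :
    (G.dartSndMatrix R)ᵀ * G.dartSymmMatrix R = (G.dartFstMatrix R)ᵀ := by
  ext v d
  simp [dartFstMatrix, dartSndMatrix, dartSymmMatrix, mul_apply, Dart.eq_symm_iff]

theorem dartSymmMatrix_mul_self : G.dartSymmMatrix R * G.dartSymmMatrix R = 1 := by
  ext d d'
  simp [dartSymmMatrix, mul_apply, one_apply, Dart.eq_symm_iff,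
    Dart.symm_involutive.injective.eq_iff, eq_comm]

theorem dartSndMatrix_transpose_mul_dartFstMatrix :
    (G.dartSndMatrix R)ᵀ * G.dartFstMatrix R = G.adjMatrix R := by
  ext u v
  simp only [dartFstMatrix, dartSndMatrix, mul_apply, adjMatrix_apply, transpose_apply, of_apply,
    mul_ite, mul_one, mul_zero, ← ite_and]
  by_cases h : G.Adj v u
  · have hd : ∀ d : G.Dart, (d.fst = v ∧ d.snd = u) ↔ d = ⟨(v, u), h⟩ := fun d => by
      simp [Dart.ext_iff, Prod.ext_iff]
    simp [hd, h.symm]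
  · refine (sum_eq_zero fun d _ => if_neg ?_).trans (if_neg fun h' => h h'.symm).symm
    rintro ⟨rfl, rfl⟩
    exact h d.adj

theorem dartFstMatrix_transpose_mul_self :
    (G.dartFstMatrix R)ᵀ * G.dartFstMatrix R = diagonal fun v => (G.degree v : R) := by
  ext u v
  simp only [dartFstMatrix, mul_apply, diagonal_apply, transpose_apply, of_apply, mul_ite, mul_one,
    mul_zero, ← ite_and]
  by_cases h : u = v
  · subst h
    simp [sum_boole, dart_fst_fiber_card_eq_degree]
  · exact (sum_eq_zero fun d _ => if_neg fun ⟨h₁, h₂⟩ => h (h₂.symm.trans h₁)).trans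
      (if_neg h).symm

theorem dartEdgeMatrix_mul_transpose :
    G.dartEdgeMatrix R * (G.dartEdgeMatrix R)ᵀ = 1 + G.dartSymmMatrix R := by
  ext d d'
  have he : ∀ e : G.edgeSet, d.edge = e ↔ e = ⟨d.edge, d.edge_mem⟩ := fun e => by
    rw [eq_comm, Subtype.ext_iff]
  simp only [dartEdgeMatrix, mul_apply, transpose_apply, of_apply, ite_mul, one_mul, zero_mul, he,
    sum_ite_eq', mem_univ, if_true, dart_edge_eq_iff, Matrix.add_apply, dartSymmMatrix]
  by_cases h : d' = d
  · subst h
    simp [(Dart.symm_ne d').symm]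
  · simp [h, Ne.symm h]

theorem dartEdgeMatrix_transpose_mul_self :
    (G.dartEdgeMatrix R)ᵀ * G.dartEdgeMatrix R = 2 := by
  ext e e'
  simp only [dartEdgeMatrix, mul_apply, transpose_apply, of_apply, mul_ite, mul_one, mul_zero,
    ← ite_and, ofNat_apply]
  by_cases h : e = e'
  · subst h
    simp [sum_boole, G.dart_edge_fiber_card e e.2]
  · refine (sum_eq_zero fun d _ => if_neg fun ⟨h₁, h₂⟩ => h ?_).trans ?_
    · simp [h]
    · exact Subtype.ext (h₂.symm.trans h₁)

theorem det_scalar_sub_dartSymmMatrix (t : R) :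
    det (scalar G.Dart t - G.dartSymmMatrix R) = (t ^ 2 - 1) ^ #G.edgeFinset := by
  have hcard : Fintype.card G.Dart = 2 * Fintype.card G.edgeSet := by
    rw [dart_card_eq_twice_card_edges, edgeFinset_card]
  have h := congrArg (eval (t + 1)) (charpoly_mul_comm_of_le (G.dartEdgeMatrix R)
    (G.dartEdgeMatrix R)ᵀ (by omega))
  rw [dartEdgeMatrix_mul_transpose, dartEdgeMatrix_transpose_mul_self, charpoly_ofNat,
    eval_charpoly, map_add, map_one, add_comm (1 : Matrix _ _ R), add_sub_add_right_eq_sub] at h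
  rw [h, edgeFinset_card, hcard]
  simp only [eval_mul, eval_pow, eval_X, eval_sub, eval_ofNat]
  rw [show 2 * Fintype.card G.edgeSet - Fintype.card G.edgeSet = Fintype.card G.edgeSet by omega,
    ← mul_pow]
  ring

theorem scalar_sub_nonbacktrackingMatrix_mul (x : R) :
    (scalar G.Dart x - G.nonbacktrackingMatrix R) * (scalar G.Dart x - G.dartSymmMatrix R) =
      scalar G.Dart (x ^ 2 - 1) -
        G.dartFstMatrix R * (x • (G.dartSndMatrix R)ᵀ - (G.dartFstMatrix R)ᵀ) := by
  have hc : ∀ M : Matrix G.Dart G.Dart R, M * scalar G.Dart x = scalar G.Dart x * M :=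
    fun M => (scalar_commute x (fun _ => mul_comm _ _) M).eq.symm
  rw [nonbacktrackingMatrix_eq, map_sub, map_pow, map_one, Matrix.mul_sub (G.dartFstMatrix R),
    Matrix.mul_smul, ← dartSndMatrix_transpose_mul_dartSymmMatrix, smul_eq_diagonal_mul,
    ← scalar_apply]
  simp only [sub_mul, mul_sub, ← Matrix.mul_assoc, hc, dartSymmMatrix_mul_self]
  noncomm_ring

theorem smul_dartSndMatrix_transpose_sub_mul_dartFstMatrix (x : R) :
    (x • (G.dartSndMatrix R)ᵀ - (G.dartFstMatrix R)ᵀ) * G.dartFstMatrix R =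
      x • G.adjMatrix R - diagonal fun v => (G.degree v : R) := by
  rw [Matrix.sub_mul, Matrix.smul_mul, dartSndMatrix_transpose_mul_dartFstMatrix,
    dartFstMatrix_transpose_mul_self]

theorem ihara_bass (x : R) :
    (x ^ 2 - 1) ^ Fintype.card V *
        (det (scalar G.Dart x - G.nonbacktrackingMatrix R) * (x ^ 2 - 1) ^ #G.edgeFinset) =
      (x ^ 2 - 1) ^ Fintype.card G.Dart *
        det (diagonal (fun v => x ^ 2 - 1 + G.degree v) - x • G.adjMatrix R) := by
  rw [← det_scalar_sub_dartSymmMatrix, ← det_mul, scalar_sub_nonbacktrackingMatrix_mul,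
    det_scalar_sub_mul_comm, smul_dartSndMatrix_transpose_sub_mul_dartFstMatrix,
    sub_sub_eq_add_sub, scalar_apply, diagonal_add]

theorem IsRegularOfDegree.det_diagonal_sub_X_smul_adjMatrix {k : ℕ}
    (hreg : G.IsRegularOfDegree k) :
    det (diagonal (fun v => X ^ 2 - 1 + (G.degree v : ℂ[X])) -
        (X : ℂ[X]) • G.adjMatrix ℂ[X]) =
      ((G.adjMatrix ℂ).charpoly.roots.map
        (fun a => X ^ 2 - C a * X + C ((k : ℂ) - 1))).prod := by
  simp only [hreg _]
  rw [← scalar_apply, ← map_adjMatrix G (algebraMap ℂ ℂ[X]),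
    det_scalar_sub_smul_map_eq_prod_roots_of_isDomain (IsAlgClosed.splits _) _ X_ne_zero]
  refine congrArg _ (Multiset.map_congr rfl fun a _ => ?_)
  simp only [algebraMap_eq, map_sub, map_natCast, map_one]
  ring

end SimpleGraph

theorem stmt10_general {V : Type*} [Fintype V] [DecidableEq V] (G : SimpleGraph V)
    [DecidableRel G.Adj] (k : ℕ)
    (hreg : G.IsRegularOfDegree k) (hk : 2 ≤ k) :
    (posSupport ℂ (quantumUR G)).charpoly =
      (X ^ 2 - 1) ^ (G.edgeFinset.card - Fintype.card V) *
        ((G.adjMatrix ℂ).charpoly.roots.map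
          (fun a => X ^ 2 - C a * X + C ((k : ℂ) - 1))).prod := by
  have hnm : Fintype.card V ≤ #G.edgeFinset := by
    have h := G.sum_degrees_eq_twice_card_edges
    simp only [hreg _, sum_const, card_univ, smul_eq_mul] at h
    nlinarith
  have hB : (posSupport ℂ (quantumUR G)).charpoly =
      det (scalar G.Dart X - G.nonbacktrackingMatrix ℂ[X]) := by
    rw [posSupport_quantumUR G ℂ fun v => hreg v ▸ hk, charpoly, charmatrix,
      RingHom.mapMatrix_apply, map_nonbacktrackingMatrix]
  have key := G.ihara_bass ℂ[X] X
  rw [hreg.det_diagonal_sub_X_smul_adjMatrix, dart_card_eq_twice_card_edges] at key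
  have hX : (X ^ 2 - 1 : ℂ[X]) ≠ 0 := by
    simpa using X_pow_sub_C_ne_zero (R := ℂ) two_pos 1
  rw [hB]
  apply mul_left_cancel₀ (pow_ne_zero (Fintype.card V + #G.edgeFinset) hX)
  rw [← mul_assoc, ← pow_add,
    show Fintype.card V + #G.edgeFinset + (#G.edgeFinset - Fintype.card V) = 2 * #G.edgeFinset by
      omega,
    ← key]
  ring

theorem stmt10 {V : Type*} [Fintype V] [DecidableEq V] (G : SimpleGraph V)
    [DecidableRel G.Adj] (hconn : G.Connected) (k : ℕ)
    (hreg : G.IsRegularOfDegree k) (hk : 2 ≤ k) :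
    (posSupport ℂ (quantumUR G)).charpoly =
      (X ^ 2 - 1) ^ (G.edgeFinset.card - Fintype.card V) *
        ((G.adjMatrix ℂ).charpoly.roots.map
          (fun a => X ^ 2 - C a * X + C ((k : ℂ) - 1))).prod :=
  stmt10_general G k hreg hk
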